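/- arXiv:0805.4056 — 3 statements merged into one kernel-verified Lean document; each statement's English description precedes it below -/
import Mathlib

section
/- Let Ψ be an abelian group, α an ordinal, and (γ_j)_{j≤α} a well-ordered family of elements of Ψ. For each ordinal i ≤ α let G_i be the subgroup generated by {γ_j : j ≤ i}, let G_{i⁻} be the subgroup generated by {γ_j : j < i}, and let n_i = min{ r ∈ ℕ_{>0} : r·γ_i ∈ G_{i⁻} } when this set is nonempty (n_i = ∞ otherwise). Then for every i ≤ α with n_i ≠ ∞ there is a unique representation n_i·γ_i = Σ_{j<i} m_j·γ_j where m_j = 0 for all but finitely many j, 0 ≤ m_j < n_j whenever n_j ≠ ∞, and m_j ∈ ℤ when n_j = ∞. -/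
/-!
Every element of `G_{i⁻}` is an integer combination `∑ a_j γ_j` of finitely many `γ_j` with
`j < i`. For existence, let `j` be the largest index used and write `a_j = q n_j + r` with
`0 ≤ r < n_j`; since `n_j γ_j ∈ G_{j⁻}`, the rest of the sum plus `q n_j γ_j` lies in `G_{j⁻}` and
has a reduced representation by well-founded induction, to which we add `r γ_j`. For uniqueness,
the difference `d` of two reduced representations is a relation among the `γ_j`; at its largest
index `j` this gives `d_j γ_j ∈ G_{j⁻}`, so `n_j ∣ d_j`, which forces `d_j = 0` because both
coefficients are residues modulo `n_j`.
-/

open Finsupp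

/-- `⊤` when `H = ⊥`, since `sInf ∅ = ⊤`. -/
noncomputable def leastPos (H : AddSubgroup ℤ) : ℕ∞ :=
  sInf {r : ℕ∞ | ∃ r' : ℕ, r = r' ∧ 0 < r' ∧ (r' : ℤ) ∈ H}

theorem leastPos_ne_zero (H : AddSubgroup ℤ) : leastPos H ≠ 0 :=
  Order.one_le_iff_ne_zero.1 <| le_sInf fun _ ⟨_, hr, hpos, _⟩ => hr ▸ by exact_mod_cast hpos

theorem mem_iff_toNat_leastPos_dvd (H : AddSubgroup ℤ) (c : ℤ) :
    c ∈ H ↔ ((leastPos H).toNat : ℤ) ∣ c := by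
  rw [leastPos]
  set S := {r : ℕ∞ | ∃ r' : ℕ, r = r' ∧ 0 < r' ∧ (r' : ℤ) ∈ H}
  rcases S.eq_empty_or_nonempty with hS | hS
  · rw [hS, sInf_empty, ENat.toNat_top, Nat.cast_zero, zero_dvd_iff]
    refine ⟨fun hc => by_contra fun hc0 => hS.subset ⟨c.natAbs, rfl, Int.natAbs_pos.2 hc0, ?_⟩,
      fun hc => hc ▸ H.zero_mem⟩
    rcases Int.natAbs_eq c with h | h
    · exact h ▸ hc
    · exact neg_neg (c.natAbs : ℤ) ▸ H.neg_mem (h ▸ hc)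
  obtain ⟨N, hN, hpos, hNH⟩ := csInf_mem hS
  have hmin : ∀ r : ℕ, 0 < r → (r : ℤ) ∈ H → N ≤ r := fun r hr hrH => by
    exact_mod_cast hN ▸ csInf_le (OrderBot.bddBelow S) ⟨r, rfl, hr, hrH⟩
  rw [hN, ENat.toNat_natCast]
  refine ⟨fun hc => Int.dvd_of_emod_eq_zero ?_,
    fun ⟨k, hk⟩ => hk ▸ mul_comm k N ▸ H.zsmul_mem hNH k⟩
  have hrem : c % N ∈ H := Int.emod_def c N ▸ H.sub_mem hc (mul_comm (c / N) N ▸ H.zsmul_mem hNH _)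
  have hlt : c % N < N := Int.emod_lt_of_pos c (by exact_mod_cast hpos)
  have hnonneg : 0 ≤ c % N := Int.emod_nonneg c (by omega)
  by_contra h0
  have := hmin (c % N).toNat (by omega) (by rwa [Int.toNat_of_nonneg hnonneg])
  omega

theorem Int.emod_toNat_eq_self_iff {e : ℕ∞} (he : e ≠ 0) (c : ℤ) :
    c % (e.toNat : ℤ) = c ↔ (e ≠ ⊤ → 0 ≤ c ∧ (c.toNat : ℕ∞) < e) := by
  induction e using ENat.recTopCoe with
  | top => simp
  | coe k =>
    have hk : 0 < (k : ℤ) := by exact_mod_cast Nat.pos_of_ne_zero (by exact_mod_cast he)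
    simp only [ENat.toNat_natCast, ne_eq, ENat.natCast_ne_top, not_false_eq_true, Nat.cast_lt,
      forall_const]
    constructor
    · intro h
      have := Int.emod_nonneg c hk.ne'
      have := Int.emod_lt_of_pos c hk
      omega
    · rintro ⟨h0, hlt⟩
      exact Int.emod_eq_of_lt h0 (by omega)

theorem linearCombination_eq_finsum {ι Ψ : Type*} [AddCommGroup Ψ] (γ : ι → Ψ) (m : ι →₀ ℤ) :
    linearCombination ℤ γ m = ∑ᶠ j, m j • γ j := by
  rw [linearCombination_apply, Finsupp.sum, finsum_eq_sum_of_support_subset]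
  intro j hj
  rw [Function.mem_support] at hj
  exact mem_support_iff.2 fun h => hj (by rw [h, zero_smul])

section Family

variable {ι Ψ : Type*} [LinearOrder ι] [AddCommGroup Ψ] (γ : ι → Ψ)

def closureBelow (i : ι) : AddSubgroup Ψ :=
  AddSubgroup.closure {x | ∃ j < i, x = γ j}

/-- The index `n_i = [G_i : G_{i⁻}]` of the paper. -/
noncomputable def relIndex (i : ι) : ℕ∞ :=
  leastPos ((closureBelow γ i).comap (zmultiplesHom Ψ (γ i)))

/-- `c % N = c` says `0 ≤ c < N` when `N > 0`, and is no constraint when `N = 0`, i.e. when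
`n_j = ⊤` (as `ℤ`-division by zero is junk: `c % 0 = c`). -/
def IsReducedCoeffs (m : ι →₀ ℤ) : Prop :=
  ∀ j, m j % (relIndex γ j).toNat = m j

theorem relIndex_ne_zero (i : ι) : relIndex γ i ≠ 0 :=
  leastPos_ne_zero _

variable {γ}

theorem zsmul_mem_closureBelow_iff {i : ι} {c : ℤ} :
    c • γ i ∈ closureBelow γ i ↔ ((relIndex γ i).toNat : ℤ) ∣ c := by
  rw [relIndex, ← mem_iff_toNat_leastPos_dvd, AddSubgroup.mem_comap, zmultiplesHom_apply]

theorem mem_closureBelow_iff {i : ι} {x : Ψ} :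
    x ∈ closureBelow γ i ↔ ∃ a ∈ supported ℤ ℤ (Set.Iio i), linearCombination ℤ γ a = x := by
  have : {x | ∃ j < i, x = γ j} = γ '' Set.Iio i := by ext; simp [eq_comm]
  rw [closureBelow, this, ← Submodule.span_int_eq_addSubgroupClosure, Submodule.mem_toAddSubgroup,
    mem_span_image_iff_linearCombination]

theorem linearCombination_sub_mem_closureBelow {a : ι →₀ ℤ} {j : ι}
    (ha : ∀ k ∈ a.support, k ≤ j) : linearCombination ℤ γ a - a j • γ j ∈ closureBelow γ j := by
  refine mem_closureBelow_iff.2 ⟨a.erase j, fun k hk => ?_, ?_⟩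
  · rw [Finset.mem_coe, support_erase, Finset.mem_erase] at hk
    exact (ha k hk.2).lt_of_ne hk.1
  · rw [erase_eq_sub_single, map_sub, linearCombination_single]

theorem IsReducedCoeffs.eq_of_linearCombination_eq {m m' : ι →₀ ℤ} (hm : IsReducedCoeffs γ m)
    (hm' : IsReducedCoeffs γ m') (h : linearCombination ℤ γ m = linearCombination ℤ γ m') :
    m = m' := by
  by_contra hne
  set d := m - m'
  have hd : d.support.Nonempty := support_nonempty_iff.2 (sub_ne_zero.2 hne)
  set j := d.support.max' hd
  have hdj : d j ≠ 0 := mem_support_iff.1 (d.support.max'_mem hd)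
  have hmem : d j • γ j ∈ closureBelow γ j := by
    have := linearCombination_sub_mem_closureBelow (γ := γ) (j := j) fun k hk =>
      d.support.le_max' k hk
    rwa [map_sub, h, sub_self, zero_sub, neg_mem_iff] at this
  have hmod : m' j % _ = m j % _ := Int.modEq_iff_dvd.2 (zsmul_mem_closureBelow_iff.1 hmem)
  rw [hm j, hm' j] at hmod
  exact hdj (by simp [d, hmod])

variable [WellFoundedLT ι]

theorem exists_isReducedCoeffs_linearCombination_eq (i : ι) {x : Ψ} (hx : x ∈ closureBelow γ i) :
    ∃ m ∈ supported ℤ ℤ (Set.Iio i), IsReducedCoeffs γ m ∧ linearCombination ℤ γ m = x := by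
  induction i using WellFoundedLT.induction generalizing x with
  | _ i ih =>
  obtain ⟨a, ha, rfl⟩ := mem_closureBelow_iff.1 hx
  rcases a.support.eq_empty_or_nonempty with h0 | hne
  · exact ⟨0, zero_mem _, fun j => by simp, by simp [support_eq_empty.1 h0]⟩
  set j := a.support.max' hne
  have hji : j < i := ha (a.support.max'_mem hne)
  set N : ℤ := ((relIndex γ j).toNat : ℤ)
  have hy : linearCombination ℤ γ a - a j • γ j + (a j / N) • (N • γ j) ∈ closureBelow γ j :=
    add_mem (linearCombination_sub_mem_closureBelow fun k hk => a.support.le_max' k hk)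
      (zsmul_mem (zsmul_mem_closureBelow_iff.2 dvd_rfl) _)
  obtain ⟨m, hm, hmr, hmy⟩ := ih j hji hy
  have hmj : m j = 0 := notMem_support_iff.1 fun h => lt_irrefl j (hm h)
  refine ⟨m + single j (a j % N),
    add_mem (supported_mono (Set.Iio_subset_Iio hji.le) hm) (single_mem_supported ℤ _ hji),
    fun k => ?_, ?_⟩
  · rcases eq_or_ne k j with rfl | hk
    · simp [hmj, N]
    · simp [single_eq_of_ne hk, hmr k]
  · rw [map_add, hmy, linearCombination_single, smul_smul, add_assoc, ← add_smul,
      Int.ediv_mul_add_emod]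
    abel

end Family

theorem stmt0_general {Ψ : Type*} [AddCommGroup Ψ] (γ : Ordinal → Ψ)
    (n : Ordinal → ℕ∞)
    (hn : ∀ i : Ordinal, n i = sInf {r : ℕ∞ | ∃ r' : ℕ, r = (r' : ℕ∞) ∧ 0 < r' ∧
      (r' : ℤ) • γ i ∈ AddSubgroup.closure {x | ∃ j < i, x = γ j}})
    (i : Ordinal) :
    ∃! m : Ordinal → ℤ,
      (∀ j, ¬ j < i → m j = 0) ∧
      {j | m j ≠ 0}.Finite ∧
      (∀ j < i, n j ≠ ⊤ → 0 ≤ m j ∧ ((m j).toNat : ℕ∞) < n j) ∧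
      ((n i).toNat : ℤ) • γ i = ∑ᶠ j, m j • γ j := by
  obtain rfl : n = relIndex γ := funext hn
  have hdigit j := Int.emod_toNat_eq_self_iff (relIndex_ne_zero γ j)
  obtain ⟨m, hsupp, hm, hsum⟩ :=
    exists_isReducedCoeffs_linearCombination_eq i (zsmul_mem_closureBelow_iff (γ := γ).2 dvd_rfl)
  refine ⟨m, ⟨fun j hj => (mem_supported' ℤ m).1 hsupp j hj, m.hasFiniteSupport,
    fun j _ => (hdigit j _).1 (hm j), by rw [← linearCombination_eq_finsum, hsum]⟩, ?_⟩
  rintro m' ⟨hout, hfin, hred, hsum'⟩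
  set m'' := ofSupportFinite m' hfin
  have hcoe : ⇑m'' = m' := ofSupportFinite_coe
  have hm'' : IsReducedCoeffs γ m'' := fun j => by
    by_cases hj : j < i
    · exact hcoe ▸ (hdigit j _).2 (hred j hj)
    · rw [hcoe, hout j hj, Int.zero_emod]
  refine congrArg DFunLike.coe (hm''.eq_of_linearCombination_eq hm ?_)
  rw [hsum, hsum', linearCombination_eq_finsum, hcoe]

/-- Lemma 2.1, existence and uniqueness of the representation
`n_i·γ_i = Σ_{j<i} m_j·γ_j`. -/
theorem stmt0 {Ψ : Type*} [AddCommGroup Ψ] (α : Ordinal) (γ : Ordinal → Ψ)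
    (n : Ordinal → ℕ∞)
    (hn : ∀ i : Ordinal, n i = sInf {r : ℕ∞ | ∃ r' : ℕ, r = (r' : ℕ∞) ∧ 0 < r' ∧
      (r' : ℤ) • γ i ∈ AddSubgroup.closure {x | ∃ j < i, x = γ j}})
    (i : Ordinal) (hi : i ≤ α) (hni : n i ≠ ⊤) :
    ∃! m : Ordinal → ℤ,
      (∀ j, ¬ j < i → m j = 0) ∧
      {j | m j ≠ 0}.Finite ∧
      (∀ j < i, n j ≠ ⊤ → 0 ≤ m j ∧ ((m j).toNat : ℕ∞) < n j) ∧
      ((n i).toNat : ℤ) • γ i = ∑ᶠ j, m j • γ j :=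
  stmt0_general γ n hn i
end

section
/- Fix an SKP [U_{i,j}, β_{i,j}] as in the paper. If a key polynomial U_{i,j} is nonzero, then as a polynomial in X_i over k[[X_0,…,X_{i−1}]] it is monic of degree d_{i,j}: U_{i,j} = X_i^{d_{i,j}} + a_{d_{i,j}−1} X_i^{d_{i,j}−1} + ⋯ + a_0, where each coefficient a_{j'} ∈ k[[X_0,…,X_{i−1}]] has zero constant term; moreover when j is not a limit ordinal, d_{i,j} = n_{i,j−1}·d_{i,j−1}. -/
/-!
Induction on `j`. Since `m j j' ≤ n j' - 1` and `d (j' + 1) = n j' * d j'`, the correction term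
`c j * ∏ U j' ^ m j j'` has degree at most `∑_{j' < j} (n j' - 1) * d j' = d j - 1`, which is
below the degree `n j * d j` of the monic leading term `U j ^ n j`. Reducing modulo the maximal
ideal kills `c j`, so `U (j + 1)` reduces to `(X ^ d j) ^ n j = X ^ d (j + 1)`.
-/

open Polynomial Finset

theorem sum_range_pred_mul_add_eq {n d : ℕ → ℕ} (hn : ∀ j, 1 ≤ n j)
    (hd : ∀ j, d (j + 1) = n j * d j) (j : ℕ) :
    ∑ i ∈ range j, (n i - 1) * d i + d 0 = d j := by
  induction j with
  | zero => simp
  | succ j ih =>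
    rw [sum_range_succ, add_right_comm, ih, hd, Nat.sub_one_mul,
      Nat.add_sub_of_le (Nat.le_mul_of_pos_left _ (hn j))]

namespace Polynomial

variable {R : Type*} [CommRing R]

theorem natDegree_prod_pow_le {ι : Type*} (s : Finset ι) (f : ι → R[X]) (m : ι → ℕ) :
    (∏ i ∈ s, f i ^ m i).natDegree ≤ ∑ i ∈ s, m i * (f i).natDegree :=
  (natDegree_prod_le _ _).trans (sum_le_sum fun _ _ => natDegree_pow_le)

theorem Monic.pow_sub_C_mul {p q : R[X]} (hp : p.Monic) {N : ℕ} (c : R)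
    (hq : q.natDegree < N * p.natDegree) :
    (p ^ N - C c * q).Monic ∧ (p ^ N - C c * q).natDegree = N * p.natDegree := by
  have hlt : (C c * q).natDegree < (p ^ N).natDegree := by
    rw [hp.natDegree_pow]
    exact (natDegree_C_mul_le c q).trans_lt hq
  exact ⟨(hp.pow N).sub_of_left (degree_lt_degree hlt),
    by rw [natDegree_sub_eq_left_of_natDegree_lt hlt, hp.natDegree_pow]⟩

theorem map_pow_sub_C_mul {S : Type*} [CommRing S] {φ : R →+* S} {c : R} (hc : φ c = 0)
    (p q : R[X]) (N : ℕ) : (p ^ N - C c * q).map φ = p.map φ ^ N := by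
  simp [hc]

theorem coeff_eq_zero_of_map_eq_X_pow {S : Type*} [CommRing S] {φ : R →+* S} {p : R[X]}
    {d : ℕ} (hp : p.map φ = X ^ d) {l : ℕ} (hl : l < d) : φ (p.coeff l) = 0 := by
  rw [← coeff_map, hp, coeff_X_pow, if_neg hl.ne]

end Polynomial

theorem keyPolynomial_monic_natDegree_map {R S : Type*} [CommRing R] [Nontrivial R]
    [CommRing S] {φ : R →+* S} {U : ℕ → R[X]} {n : ℕ → ℕ} (hn : ∀ j, 1 ≤ n j)
    {c : ℕ → R} (hc : ∀ j, φ (c j) = 0) {m : ℕ → ℕ → ℕ} (hm : ∀ j j', j' < j → m j j' < n j')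
    (hU0 : U 0 = X) (hUs : ∀ j, U (j + 1) = U j ^ n j - C (c j) * ∏ j' ∈ range j, U j' ^ m j j')
    {d : ℕ → ℕ} (hd0 : d 0 = 1) (hds : ∀ j, d (j + 1) = n j * d j) (j : ℕ) :
    (U j).Monic ∧ (U j).natDegree = d j ∧ (U j).map φ = X ^ d j := by
  induction j using Nat.strong_induction_on with
  | _ j ih =>
    cases j with
    | zero => simp [hU0, hd0]
    | succ j =>
      obtain ⟨hmonic, hdeg, hmap⟩ := ih j j.lt_succ_self
      have hprod : (∏ j' ∈ range j, U j' ^ m j j').natDegree < n j * d j := by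
        calc (∏ j' ∈ range j, U j' ^ m j j').natDegree
            ≤ ∑ j' ∈ range j, m j j' * (U j').natDegree := natDegree_prod_pow_le _ _ _
          _ ≤ ∑ j' ∈ range j, (n j' - 1) * d j' := by
              refine sum_le_sum fun j' hj' => ?_
              rw [mem_range] at hj'
              rw [(ih j' (hj'.trans j.lt_succ_self)).2.1]
              exact Nat.mul_le_mul_right _ (Nat.le_sub_one_of_lt (hm j j' hj'))
          _ < d j := by
              rw [← sum_range_pred_mul_add_eq hn hds j, hd0]
              exact Nat.lt_succ_self _
          _ ≤ n j * d j := Nat.le_mul_of_pos_left _ (hn j)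
      rw [← hdeg] at hprod
      obtain ⟨hmonic', hdeg'⟩ := hmonic.pow_sub_C_mul (c j) hprod
      rw [hUs, hds]
      refine ⟨hmonic', by rw [hdeg', hdeg], ?_⟩
      rw [map_pow_sub_C_mul (hc j), hmap, ← pow_mul, mul_comm]

/-- Lemma 3.1: each key polynomial of an SKP (level `i`, coefficients in
`R = k[[X_0,…,X_{i-1}]]`, successor recursion `U_{j+1} = U_j^{n_j} − c_j·∏_{j'<j} U_{j'}^{m_{j,j'}}`
with the lower-level factor `c_j` in the maximal ideal) is monic in `X_i` of degree
`d_j`, with all lower coefficients having zero constant term; moreover `d_{j+1} = n_j·d_j`. -/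
theorem stmt8 {k : Type*} [Field k] (e : ℕ)
    (U : ℕ → Polynomial (MvPowerSeries (Fin e) k))
    (n : ℕ → ℕ) (hn : ∀ j, 1 ≤ n j)
    (c : ℕ → MvPowerSeries (Fin e) k)
    (hc : ∀ j, MvPowerSeries.constantCoeff (c j) = 0)
    (m : ℕ → ℕ → ℕ) (hm : ∀ j j', j' < j → m j j' < n j')
    (hU0 : U 0 = Polynomial.X)
    (hUs : ∀ j, U (j + 1) = (U j) ^ (n j) -
      Polynomial.C (c j) * ∏ j' ∈ Finset.range j, (U j') ^ (m j j'))
    (d : ℕ → ℕ) (hd0 : d 0 = 1) (hds : ∀ j, d (j + 1) = n j * d j) :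
    ∀ j, (U j).Monic ∧ (U j).natDegree = d j ∧
      ∀ l < d j, MvPowerSeries.constantCoeff ((U j).coeff l) = 0 := by
  intro j
  obtain ⟨hmonic, hdeg, hmap⟩ := keyPolynomial_monic_natDegree_map hn hc hm hU0 hUs hd0 hds j
  exact ⟨hmonic, hdeg, fun _ hl => coeff_eq_zero_of_map_eq_X_pow hmap hl⟩
end

section
/- Let (β_{i,j}) be a sequence of values for an SKP, and suppose two adic-form exponent vectors I and I' (i.e., 0 ≤ I_{i,j}, I'_{i,j} < n_{i,j} for all j < α_i, with equal top-level exponents I_{i,α_i} = I'_{i,α_i} for all i) satisfy Σ I_{i,j}β_{i,j} = Σ I'_{i,j}β_{i,j}. Then I = I'. (Monomials of the initial form with equal vectors of powers VP coincide.) -/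
/-- Lemma 4.4, max-degree: two adic-form exponent vectors with equal
top-level exponents (`n i = ∞`) and equal values `Σ I_i β_i` coincide. -/
theorem stmt14 {ι Φ : Type*} [LinearOrder ι] [AddCommGroup Φ]
    (β : ι → Φ) (n : ι → ℕ∞)
    (hβ : ∀ i : ι, n i ≠ ⊤ → ∀ m : ℕ, 0 < m → (m : ℕ∞) < n i →
      (m : ℤ) • β i ∉ AddSubgroup.closure {x | ∃ i' < i, x = β i'})
    (I I' : ι →₀ ℕ)
    (hI : ∀ i, n i ≠ ⊤ → (I i : ℕ∞) < n i)
    (hI' : ∀ i, n i ≠ ⊤ → (I' i : ℕ∞) < n i)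
    (htop : ∀ i, n i = ⊤ → I i = I' i)
    (hsum : (I.sum fun i m => m • β i) = (I'.sum fun i m => m • β i)) :
    I = I' := by
  classical
  by_contra hne
  have hex : ∃ i, I i ≠ I' i := by
    by_contra h
    push_neg at h
    exact hne (Finsupp.ext h)
  set A : Finset ι := I.support ∪ I'.support with hA
  set S : Finset ι := A.filter (fun j => I j ≠ I' j) with hS
  have hSne : S.Nonempty := by
    obtain ⟨i, hi⟩ := hex
    refine ⟨i, Finset.mem_filter.mpr ⟨?_, hi⟩⟩
    rcases Nat.eq_zero_or_pos (I i) with h0 | hp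
    · exact Finset.mem_union_right _
        (Finsupp.mem_support_iff.mpr (fun h => hi (h0.trans h.symm)))
    · exact Finset.mem_union_left _ (Finsupp.mem_support_iff.mpr hp.ne')
  set i : ι := S.max' hSne with hi
  have hiS : i ∈ S := S.max'_mem hSne
  have hiA : i ∈ A := (Finset.mem_filter.mp hiS).1
  have hiNe : I i ≠ I' i := (Finset.mem_filter.mp hiS).2
  have hn : n i ≠ ⊤ := fun h => hiNe (htop i h)
  -- total sums over A agree
  have h1 : (I.sum fun j m => m • β j) = ∑ j ∈ A, (I j) • β j :=
    Finsupp.sum_of_support_subset I Finset.subset_union_left _ (fun j _ => zero_smul ℕ _)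
  have h2 : (I'.sum fun j m => m • β j) = ∑ j ∈ A, (I' j) • β j :=
    Finsupp.sum_of_support_subset I' Finset.subset_union_right _ (fun j _ => zero_smul ℕ _)
  have hzero : ∑ j ∈ A, ((I j : ℤ) - (I' j : ℤ)) • β j = 0 := by
    simp only [sub_smul, Finset.sum_sub_distrib, natCast_zsmul]
    rw [← h1, ← h2, hsum, sub_self]
  have hsplit : ((I i : ℤ) - (I' i : ℤ)) • β i
      = - ∑ j ∈ A.erase i, ((I j : ℤ) - (I' j : ℤ)) • β j := by
    rw [← Finset.add_sum_erase A (fun j => ((I j : ℤ) - (I' j : ℤ)) • β j) hiA] at hzero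
    exact eq_neg_of_add_eq_zero_left hzero
  set G : AddSubgroup Φ := AddSubgroup.closure {x | ∃ i' < i, x = β i'} with hG
  have hmemG : ((I i : ℤ) - (I' i : ℤ)) • β i ∈ G := by
    rw [hsplit]
    refine neg_mem (AddSubgroup.sum_mem G fun j hj => ?_)
    obtain ⟨hjne, hjA⟩ := Finset.mem_erase.mp hj
    by_cases hjc : I j = I' j
    · simp only [hjc, sub_self, zero_smul]
      exact zero_mem G
    · have hjS : j ∈ S := Finset.mem_filter.mpr ⟨hjA, hjc⟩
      have hjlt : j < i := lt_of_le_of_ne (S.le_max' j hjS) hjne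
      exact AddSubgroup.zsmul_mem G
        (AddSubgroup.subset_closure ⟨j, hjlt, rfl⟩) _
  set d : ℤ := (I i : ℤ) - (I' i : ℤ) with hd
  set m : ℕ := d.natAbs with hm
  have hmpos : 0 < m := Int.natAbs_pos.mpr (sub_ne_zero.mpr (by exact_mod_cast hiNe))
  have hmle : m ≤ max (I i) (I' i) := by
    rcases le_total (I' i) (I i) with h | h
    · have : d = ((I i - I' i : ℕ) : ℤ) := by
        rw [hd]; push_cast [h]; ring
      rw [hm, this, Int.natAbs_natCast]
      exact le_max_of_le_left (Nat.sub_le _ _)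
    · have : d = -(((I' i - I i : ℕ) : ℤ)) := by
        rw [hd]; push_cast [h]; ring
      rw [hm, this, Int.natAbs_neg, Int.natAbs_natCast]
      exact le_max_of_le_right (Nat.sub_le _ _)
  have hmlt : (m : ℕ∞) < n i := by
    rcases le_total (I' i) (I i) with h | h
    · exact lt_of_le_of_lt (by exact_mod_cast hmle.trans (max_le le_rfl h)) (hI i hn)
    · exact lt_of_le_of_lt (by exact_mod_cast hmle.trans (max_le h le_rfl)) (hI' i hn)
  refine hβ i hn m hmpos hmlt ?_
  rcases Int.natAbs_eq d with he | he
  · rw [← he]; exact hmemG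
  · have hmd : (m : ℤ) = -d := by omega
    rw [hmd, neg_smul]
    exact neg_mem hmemG
end
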